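/- Let G be a group in which every subnormal subgroup of infinite rank is commensurable with a normal subgroup, let X be a subnormal subgroup of finite rank of G, and suppose there exist normal subgroups S₃ and S₄ of G of infinite rank with S₃ ∩ S₄ = {1}, X ∩ S₃S₄ = {1}. Then X is commensurable with a normal subgroup of G. -/

import Mathlib

/-- A subgroup is subnormal if it is joined to the whole group by a finite
chain of successive normal subgroups. -/
def IsSubnormal {G : Type*} [Group G] (H : Subgroup G) : Prop :=
  ∃ n : ℕ, ∃ c : ℕ → Subgroup G, c 0 = H ∧ c n = ⊤ ∧
    ∀ i < n, c i ≤ c (i + 1) ∧ ((c i).subgroupOf (c (i + 1))).Normal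

/-- A group has finite rank if there is `r` such that every finitely generated
subgroup can be generated by at most `r` elements. -/
def HasFiniteRank (G : Type*) [Group G] : Prop :=
  ∃ r : ℕ, ∀ H : Subgroup G, H.FG →
    ∃ S : Finset G, S.card ≤ r ∧ Subgroup.closure (S : Set G) = H

/-- A subgroup is a cn-subgroup if it is commensurable with some normal subgroup. -/
def IsCN {G : Type*} [Group G] (H : Subgroup G) : Prop :=
  ∃ N : Subgroup G, N.Normal ∧ Subgroup.Commensurable H N

/-- A subgroup is a cf-subgroup if its normal core has finite index in it. -/
def IsCF {G : Type*} [Group G] (H : Subgroup G) : Prop :=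
  H.normalCore.relIndex H ≠ 0

/-! Because S₃ and S₄ are normal, each `X ⊔ Sᵢ` is subnormal, and it has infinite rank since
it contains `Sᵢ`; so it is commensurable with a normal subgroup `Nᵢ`. The hypotheses
`S₃ ⊓ S₄ = ⊥` and `X ⊓ (S₃ ⊔ S₄) = ⊥` give, through the modular law,
`X = (X ⊔ S₃) ⊓ (X ⊔ S₄)`, which is then commensurable with the normal subgroup
`N₃ ⊓ N₄`. -/

lemma HasFiniteRank.of_injective {H K : Type*} [Group H] [Group K] {f : H →* K}
    (hf : Function.Injective f) (hK : HasFiniteRank K) : HasFiniteRank H := by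
  classical
  obtain ⟨r, hr⟩ := hK
  refine ⟨r, fun L hL => ?_⟩
  have hL_map : (L.map f).FG := by
    obtain ⟨T, rfl⟩ := hL
    exact ⟨T.image f, by rw [Finset.coe_image, MonoidHom.map_closure]⟩
  obtain ⟨S, hcard, hS⟩ := hr (L.map f) hL_map
  have hS_range : (S : Set K) ⊆ Set.range f := by
    rw [← MonoidHom.coe_range]
    exact Subgroup.subset_closure.trans (hS.trans_le (Subgroup.map_le_range f L))
  refine ⟨S.preimage f hf.injOn, ?_, Subgroup.map_injective hf ?_⟩
  · rw [Finset.card_preimage]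
    exact (Finset.card_filter_le _ _).trans hcard
  · rw [MonoidHom.map_closure, Finset.coe_preimage, Set.image_preimage_eq_of_subset hS_range, hS]

lemma HasFiniteRank.of_le {G : Type*} [Group G] {H K : Subgroup G} (h : H ≤ K)
    (hK : HasFiniteRank K) : HasFiniteRank H :=
  hK.of_injective (Subgroup.inclusion_injective h)

lemma IsSubnormal.sup_normal {G : Type*} [Group G] {X N : Subgroup G} [N.Normal]
    (hX : IsSubnormal X) : IsSubnormal (X ⊔ N) := by
  obtain ⟨n, c, hc0, hcn, hc⟩ := hX
  refine ⟨n, fun i => c i ⊔ N, by simp [hc0], by simp [hcn], fun i hi => ?_⟩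
  obtain ⟨hle, hnormal⟩ := hc i hi
  refine ⟨sup_le_sup_right hle N, Subgroup.normal_subgroupOf_of_le_normalizer (sup_le ?_ ?_)⟩
  · exact ((Subgroup.normal_subgroupOf_iff_le_normalizer hle).1 hnormal).trans
      Subgroup.normalizer_le_normalizer_sup_normal
  · exact le_sup_right.trans Subgroup.le_normalizer

namespace Subgroup

open scoped Pointwise

variable {G : Type*} [Group G]

theorem Commensurable.inf {A B C D : Subgroup G} (hAB : Commensurable A B)
    (hCD : Commensurable C D) : Commensurable (A ⊓ C) (B ⊓ D) :=
  ⟨relIndex_inf_ne_zero (mt (relIndex_eq_zero_of_le_right inf_le_left) hAB.1)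
      (mt (relIndex_eq_zero_of_le_right inf_le_right) hCD.1),
    relIndex_inf_ne_zero (mt (relIndex_eq_zero_of_le_right inf_le_left) hAB.2)
      (mt (relIndex_eq_zero_of_le_right inf_le_right) hCD.2)⟩

/-- Dedekind's modular law; the hypothesis on `A ⊔ B` holds as soon as `A` or `B` is normal. -/
theorem sup_inf_assoc_of_coe_sup_eq_mul {A B C : Subgroup G}
    (hAB : ((A ⊔ B : Subgroup G) : Set G) = (A : Set G) * B) (h : A ≤ C) :
    (A ⊔ B) ⊓ C = A ⊔ B ⊓ C := by
  refine le_antisymm (fun g hg => ?_)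
    (le_inf (sup_le_sup_left inf_le_left _) (sup_le h inf_le_right))
  obtain ⟨hg, hgC⟩ := mem_inf.1 hg
  rw [← SetLike.mem_coe, hAB] at hg
  obtain ⟨a, ha, b, hb, rfl⟩ := hg
  have hbC : b ∈ C := by simpa using mul_mem (inv_mem (h ha)) hgC
  exact mul_mem (mem_sup_left ha) (mem_sup_right ⟨hb, hbC⟩)

theorem sup_inf_sup_eq_left_of_inf_eq_bot (X M N : Subgroup G) [M.Normal] [N.Normal]
    (hMN : M ⊓ N = ⊥) (hX : X ⊓ (M ⊔ N) = ⊥) : (X ⊔ M) ⊓ (X ⊔ N) = X := by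
  have hN_sup : (N ⊔ X) ⊓ (N ⊔ M) = N := by
    rw [sup_inf_assoc_of_coe_sup_eq_mul (normal_mul N X) le_sup_left, sup_comm N M, hX, sup_bot_eq]
  have hM_inf : M ⊓ (X ⊔ N) = ⊥ := by
    refine eq_bot_iff.2 (le_trans ?_ hMN.le)
    calc M ⊓ (X ⊔ N) ≤ M ⊓ ((N ⊔ X) ⊓ (N ⊔ M)) := by
          rw [sup_comm N X]
          exact le_inf inf_le_left (le_inf inf_le_right (inf_le_left.trans le_sup_right))
      _ = M ⊓ N := by rw [hN_sup]
  rw [sup_inf_assoc_of_coe_sup_eq_mul (mul_normal X M) le_sup_left, hM_inf, sup_bot_eq]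

end Subgroup

lemma IsCN.inf {G : Type*} [Group G] {H K : Subgroup G} (hH : IsCN H) (hK : IsCN K) :
    IsCN (H ⊓ K) := by
  obtain ⟨M, hM, hHM⟩ := hH
  obtain ⟨N, hN, hKN⟩ := hK
  exact ⟨M ⊓ N, Subgroup.normal_inf_normal M N, hHM.inf hKN⟩

theorem lemma_complement_general {G : Type*} [Group G]
    (hT : ∀ H : Subgroup G, IsSubnormal H → ¬ HasFiniteRank H → IsCN H)
    (X : Subgroup G) (hX : IsSubnormal X)
    (S₃ S₄ : Subgroup G) (h3n : S₃.Normal) (h4n : S₄.Normal)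
    (h3rk : ¬ HasFiniteRank S₃) (h4rk : ¬ HasFiniteRank S₄)
    (h34 : S₃ ⊓ S₄ = ⊥) (hX34 : X ⊓ (S₃ ⊔ S₄) = ⊥) :
    IsCN X := by
  have hcn (S : Subgroup G) [S.Normal] (hS : ¬ HasFiniteRank S) : IsCN (X ⊔ S) :=
    hT _ hX.sup_normal fun h => hS (h.of_le le_sup_right)
  rw [← Subgroup.sup_inf_sup_eq_left_of_inf_eq_bot X S₃ S₄ h34 hX34]
  exact (hcn S₃ h3rk).inf (hcn S₄ h4rk)

theorem lemma_complement {G : Type*} [Group G]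
    (hT : ∀ H : Subgroup G, IsSubnormal H → ¬ HasFiniteRank H → IsCN H)
    (X : Subgroup G) (hX : IsSubnormal X) (hXrk : HasFiniteRank X)
    (S₃ S₄ : Subgroup G) (h3n : S₃.Normal) (h4n : S₄.Normal)
    (h3rk : ¬ HasFiniteRank S₃) (h4rk : ¬ HasFiniteRank S₄)
    (h34 : S₃ ⊓ S₄ = ⊥) (hX34 : X ⊓ (S₃ ⊔ S₄) = ⊥) :
    IsCN X :=
  lemma_complement_general hT X hX S₃ S₄ h3n h4n h3rk h4rk h34 hX34
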